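/- For any grid functions u¹, u², w¹, w² : {0,…,N+1} → ℝ, the functional φ_h := h Σ_{j=0}^{N} x_{j+1/2} (ρ u¹_{j+1/2} w¹_{j+1/2} + μ u²_{j+1/2} w²_{j+1/2}) satisfies |φ_h| ≤ L η E_h, where E_h := (h/2) Σ_{j=0}^{N} [ρ |w¹_{j+1/2}|² + μ |w²_{j+1/2}|² + β |γ u¹_{j+1/2} − u²_{j+1/2}|² + α₁ |u¹_{j+1/2}|²]. Consequently, for every 0 < δ < 1/(Lη), (1 − δLη) E_h ≤ E_h + δ φ_h ≤ (1 + δLη) E_h. -/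

import Mathlib

/-!
Write `μ u² w² = μ γ u¹ w² − μ (γ u¹ − u²) w²`. Each of the three resulting cross terms pairs two
of the four energy densities and is bounded by weighted AM-GM, `2|c x y| ≤ k (a x² + b y²)` with
`k² a b = c²`; the weights `k` that occur are `√(ρ/α₁)`, `√(μ/β)` and `√(μγ²/α₁)`, and collecting
them per energy density gives the constant `η`. Since the nodes satisfy `0 ≤ x_{j+1/2} ≤ L`, this
yields `|φ_h| ≤ L η E_h`, and the two-sided bound on `E_h + δ φ_h` follows at once.
-/

noncomputable section

/-- Midpoint average `U_{j+1/2} = (U_j + U_{j+1})/2` of a grid function. -/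
def gridMid (U : ℕ → ℝ) (j : ℕ) : ℝ := (U j + U (j + 1)) / 2

/-- The discrete ORFD energy. -/
def discEnergy (ρ μ β γ α₁ h : ℝ) (N : ℕ) (u1 u2 w1 w2 : ℕ → ℝ) : ℝ :=
  h / 2 * ∑ j ∈ Finset.range (N + 1),
    (ρ * gridMid w1 j ^ 2 + μ * gridMid w2 j ^ 2
      + β * (γ * gridMid u1 j - gridMid u2 j) ^ 2 + α₁ * gridMid u1 j ^ 2)

/-- The auxiliary functional
`φ_h = h Σ_{j=0}^N x_{j+1/2}(ρ u¹_{j+1/2} w¹_{j+1/2} + μ u²_{j+1/2} w²_{j+1/2})`,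
with `x_{j+1/2} = (j + 1/2)h`. -/
def discPhi (ρ μ h : ℝ) (N : ℕ) (u1 u2 w1 w2 : ℕ → ℝ) : ℝ :=
  h * ∑ j ∈ Finset.range (N + 1), ((j : ℝ) + 1 / 2) * h *
    (ρ * gridMid u1 j * gridMid w1 j + μ * gridMid u2 j * gridMid w2 j)

open Finset

theorem two_mul_abs_mul_mul_le {a b c k : ℝ} (ha : 0 ≤ a) (hb : 0 ≤ b) (hk : 0 ≤ k)
    (hc : k ^ 2 * (a * b) = c ^ 2) (x y : ℝ) :
    2 * |c * x * y| ≤ k * (a * x ^ 2 + b * y ^ 2) := by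
  have hX := abs_nonneg x
  have hY := abs_nonneg y
  rw [abs_mul, abs_mul, ← sq_abs x, ← sq_abs y]
  rcases (mul_nonneg hk ha).eq_or_lt with hka | hka
  · have hc0 : c ^ 2 = 0 := by rw [← hc]; linear_combination -(k * b) * hka
    simp only [pow_eq_zero_iff two_ne_zero |>.mp hc0, abs_zero, zero_mul, mul_zero]
    positivity
  · refine le_of_mul_le_mul_left ?_ hka
    nlinarith [sq_nonneg (k * a * |x| - |c| * |y|), sq_abs c]

theorem two_mul_abs_mul_mul_le_sqrt {a b : ℝ} (ha : 0 < a) (hb : 0 < b) (c x y : ℝ) :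
    2 * |c * x * y| ≤ √(c ^ 2 / (a * b)) * (a * x ^ 2 + b * y ^ 2) :=
  two_mul_abs_mul_mul_le ha.le hb.le (Real.sqrt_nonneg _)
    (by rw [Real.sq_sqrt (by positivity)]; field_simp) x y

theorem two_mul_abs_add_le_max_mul {ρ μ β γ α₁ : ℝ} (hρ : 0 < ρ) (hμ : 0 < μ) (hβ : 0 < β)
    (hα₁ : 0 < α₁) (a b w v : ℝ) :
    2 * |ρ * a * w + μ * b * v| ≤
      max (√(ρ / α₁) + √(μ * γ ^ 2 / α₁)) (√(μ / β) + √(μ * γ ^ 2 / α₁)) *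
        (ρ * w ^ 2 + μ * v ^ 2 + β * (γ * a - b) ^ 2 + α₁ * a ^ 2) := by
  have h₁ := two_mul_abs_mul_mul_le_sqrt hρ hα₁ ρ w a
  have h₂ := two_mul_abs_mul_mul_le_sqrt hμ hβ μ v (γ * a - b)
  have h₃ := two_mul_abs_mul_mul_le_sqrt hμ hα₁ (μ * γ) v a
  rw [show ρ ^ 2 / (ρ * α₁) = ρ / α₁ by field_simp] at h₁
  rw [show μ ^ 2 / (μ * β) = μ / β by field_simp] at h₂
  rw [show (μ * γ) ^ 2 / (μ * α₁) = μ * γ ^ 2 / α₁ by field_simp] at h₃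
  set η := max (√(ρ / α₁) + √(μ * γ ^ 2 / α₁)) (√(μ / β) + √(μ * γ ^ 2 / α₁))
  have hη₁ : √(ρ / α₁) + √(μ * γ ^ 2 / α₁) ≤ η := le_max_left _ _
  have hη₂ : √(μ / β) + √(μ * γ ^ 2 / α₁) ≤ η := le_max_right _ _
  have hk₃ := Real.sqrt_nonneg (μ * γ ^ 2 / α₁)
  have hsplit : ρ * a * w + μ * b * v = ρ * w * a - μ * v * (γ * a - b) + μ * γ * v * a := by
    ring
  calc 2 * |ρ * a * w + μ * b * v|
      ≤ 2 * |ρ * w * a| + 2 * |μ * v * (γ * a - b)| + 2 * |μ * γ * v * a| := by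
        rw [hsplit]
        linarith [abs_add_le (ρ * w * a - μ * v * (γ * a - b)) (μ * γ * v * a),
          abs_sub (ρ * w * a) (μ * v * (γ * a - b))]
    _ ≤ η * (ρ * w ^ 2 + μ * v ^ 2 + β * (γ * a - b) ^ 2 + α₁ * a ^ 2) := by
        have hW : 0 ≤ ρ * w ^ 2 := by positivity
        have hV : 0 ≤ μ * v ^ 2 := by positivity
        have hD : 0 ≤ β * (γ * a - b) ^ 2 := by positivity
        have hA : 0 ≤ α₁ * a ^ 2 := by positivity
        linarith [mul_le_mul_of_nonneg_right hη₁ hA, mul_le_mul_of_nonneg_right hη₂ hV,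
          mul_le_mul_of_nonneg_right ((le_add_of_nonneg_right hk₃).trans hη₁) hW,
          mul_le_mul_of_nonneg_right ((le_add_of_nonneg_right hk₃).trans hη₂) hD]

theorem abs_sum_mul_le_mul_sum {ι : Type*} {s : Finset ι} {x P Q : ι → ℝ} {L : ℝ}
    (hx : ∀ j ∈ s, 0 ≤ x j ∧ x j ≤ L) (hP : ∀ j ∈ s, |P j| ≤ Q j) :
    |∑ j ∈ s, x j * P j| ≤ L * ∑ j ∈ s, Q j := by
  rw [mul_sum]
  refine (abs_sum_le_sum_abs _ _).trans (sum_le_sum fun j hj => ?_)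
  obtain ⟨hx₀, hxL⟩ := hx j hj
  rw [abs_mul, abs_of_nonneg hx₀]
  exact mul_le_mul hxL (hP j hj) (abs_nonneg _) (hx₀.trans hxL)

theorem midpoint_node_nonneg_and_le {N j : ℕ} {L : ℝ} (hj : j ∈ range (N + 1)) (hL : 0 ≤ L) :
    0 ≤ ((j : ℝ) + 1 / 2) * (L / (N + 1)) ∧ ((j : ℝ) + 1 / 2) * (L / (N + 1)) ≤ L := by
  have hjN : (j : ℝ) + 1 ≤ N + 1 := by exact_mod_cast mem_range.mp hj
  refine ⟨by positivity, ?_⟩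
  rw [mul_div_assoc', div_le_iff₀ (by positivity)]
  nlinarith

theorem abs_discPhi_le_mul_discEnergy {ρ μ β γ α₁ L : ℝ} (hρ : 0 < ρ) (hμ : 0 < μ)
    (hβ : 0 < β) (hα₁ : 0 < α₁) (hL : 0 ≤ L) (N : ℕ) (u1 u2 w1 w2 : ℕ → ℝ) :
    |discPhi ρ μ (L / (N + 1)) N u1 u2 w1 w2| ≤
      L * max (√(ρ / α₁) + √(μ * γ ^ 2 / α₁)) (√(μ / β) + √(μ * γ ^ 2 / α₁)) *
        discEnergy ρ μ β γ α₁ (L / (N + 1)) N u1 u2 w1 w2 := by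
  set η := max (√(ρ / α₁) + √(μ * γ ^ 2 / α₁)) (√(μ / β) + √(μ * γ ^ 2 / α₁))
  set h : ℝ := L / (N + 1)
  have hsum := abs_sum_mul_le_mul_sum (s := range (N + 1)) (L := L)
    (x := fun j => ((j : ℝ) + 1 / 2) * h)
    (P := fun j => ρ * gridMid u1 j * gridMid w1 j + μ * gridMid u2 j * gridMid w2 j)
    (fun j hj => midpoint_node_nonneg_and_le hj hL) (fun j _ => le_div_iff₀' two_pos |>.mpr
      (two_mul_abs_add_le_max_mul hρ hμ hβ hα₁ (γ := γ) _ _ _ _))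
  rw [discPhi, discEnergy, abs_mul, abs_of_nonneg (by positivity)]
  calc h * |∑ j ∈ range (N + 1), ((j : ℝ) + 1 / 2) * h *
          (ρ * gridMid u1 j * gridMid w1 j + μ * gridMid u2 j * gridMid w2 j)|
      ≤ h * (L * ∑ j ∈ range (N + 1), η * (ρ * gridMid w1 j ^ 2 + μ * gridMid w2 j ^ 2
          + β * (γ * gridMid u1 j - gridMid u2 j) ^ 2 + α₁ * gridMid u1 j ^ 2) / 2) :=
        mul_le_mul_of_nonneg_left hsum (by positivity)
    _ = _ := by rw [← sum_div, ← mul_sum]; ring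

theorem add_mul_mem_Icc_of_abs_le {φ E K δ : ℝ} (hφ : |φ| ≤ K * E) (hδ : 0 ≤ δ) :
    E + δ * φ ∈ Set.Icc ((1 - δ * K) * E) ((1 + δ * K) * E) := by
  obtain ⟨hlo, hhi⟩ := abs_le.mp hφ
  exact ⟨by nlinarith, by nlinarith⟩

theorem stmt_9_general (ρ μ β γ α₁ η : ℝ)
    (hρ : 0 < ρ) (hμ : 0 < μ) (hβ : 0 < β) (hα₁ : 0 < α₁)
    (hη : η = max (Real.sqrt (ρ / α₁) + Real.sqrt (μ * γ ^ 2 / α₁))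
      (Real.sqrt (μ / β) + Real.sqrt (μ * γ ^ 2 / α₁)))
    (N : ℕ) (L h : ℝ) (hL : 0 < L) (hh : h = L / (N + 1))
    (u1 u2 w1 w2 : ℕ → ℝ) :
    |discPhi ρ μ h N u1 u2 w1 w2| ≤ L * η * discEnergy ρ μ β γ α₁ h N u1 u2 w1 w2 ∧
    ∀ δ : ℝ, 0 < δ → δ < 1 / (L * η) →
      (1 - δ * L * η) * discEnergy ρ μ β γ α₁ h N u1 u2 w1 w2 ≤
          discEnergy ρ μ β γ α₁ h N u1 u2 w1 w2 + δ * discPhi ρ μ h N u1 u2 w1 w2 ∧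
        discEnergy ρ μ β γ α₁ h N u1 u2 w1 w2 + δ * discPhi ρ μ h N u1 u2 w1 w2 ≤
          (1 + δ * L * η) * discEnergy ρ μ β γ α₁ h N u1 u2 w1 w2 := by
  subst hη hh
  have hbound := abs_discPhi_le_mul_discEnergy (γ := γ) hρ hμ hβ hα₁ hL.le N u1 u2 w1 w2
  refine ⟨hbound, fun δ hδ _ => ?_⟩
  simpa only [mul_assoc, Set.mem_Icc] using add_mul_mem_Icc_of_abs_le hbound hδ.le

/-- `|φ_h| ≤ L η E_h`; consequently, for every `0 < δ < 1/(Lη)`,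
`(1 − δLη) E_h ≤ E_h + δ φ_h ≤ (1 + δLη) E_h`. -/
theorem stmt_9 (ρ μ α β γ α₁ η : ℝ)
    (hρ : 0 < ρ) (hμ : 0 < μ) (hα : 0 < α) (hβ : 0 < β) (hγ : 0 < γ)
    (hα₁def : α₁ = α - γ ^ 2 * β) (hα₁ : 0 < α₁)
    (hη : η = max (Real.sqrt (ρ / α₁) + Real.sqrt (μ * γ ^ 2 / α₁))
      (Real.sqrt (μ / β) + Real.sqrt (μ * γ ^ 2 / α₁)))
    (N : ℕ) (L h : ℝ) (hL : 0 < L) (hh : h = L / (N + 1))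
    (u1 u2 w1 w2 : ℕ → ℝ) :
    |discPhi ρ μ h N u1 u2 w1 w2| ≤ L * η * discEnergy ρ μ β γ α₁ h N u1 u2 w1 w2 ∧
    ∀ δ : ℝ, 0 < δ → δ < 1 / (L * η) →
      (1 - δ * L * η) * discEnergy ρ μ β γ α₁ h N u1 u2 w1 w2 ≤
          discEnergy ρ μ β γ α₁ h N u1 u2 w1 w2 + δ * discPhi ρ μ h N u1 u2 w1 w2 ∧
        discEnergy ρ μ β γ α₁ h N u1 u2 w1 w2 + δ * discPhi ρ μ h N u1 u2 w1 w2 ≤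
          (1 + δ * L * η) * discEnergy ρ μ β γ α₁ h N u1 u2 w1 w2 :=
  stmt_9_general ρ μ β γ α₁ η hρ hμ hβ hα₁ hη N L h hL hh u1 u2 w1 w2

end
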